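/- For every integer z ≥ 1, Σ_{D} 1/φ(D) ≥ z, where the sum is over all monic squarefree polynomials D ∈ F_q[x] with deg D ≤ z and all of whose monic irreducible factors have degree at most z (equivalently, over all monic divisors D of P_z = ∏_{deg P ≤ z} P with deg D ≤ z). -/

import Mathlib

open Polynomial

noncomputable section

variable {F : Type*}

/-- Euler's totient: the number of residue classes modulo `D` coprime to `D`. -/
def polyPhi [Field F] (D : Polynomial F) : ℕ :=
  Nat.card ((Polynomial F ⧸ Ideal.span {D}))ˣ

/-!
With `q = #F`, the monic `N` of degree at most `z` satisfy `∑ q ^ (-deg N) = z + 1`, because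
there are exactly `q ^ n` monic polynomials of degree `n`. Group these `N` by their radical `D`:
it is monic, squarefree, of degree at most `z`, hence one of the `D` in the sum. Every `N` with
radical `D` is `∏_{P ∣ D} P ^ e_P` with `1 ≤ e_P ≤ z`, so the fibre over `D` contributes at
most `∏_{P ∣ D} ∑_{e ≥ 1} q ^ (-e deg P) = ∏_{P ∣ D} (q ^ deg P - 1)⁻¹ = 1 / φ(D)`.
-/

open UniqueFactorizationMonoid Finset Function

section Multiplicativity

variable [Field F]

lemma polyPhi_one : polyPhi (1 : F[X]) = 1 := by
  rw [polyPhi, Ideal.span_singleton_one]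
  exact Nat.card_unique

lemma polyPhi_mul {A B : F[X]} (h : IsCoprime A B) : polyPhi (A * B) = polyPhi A * polyPhi B := by
  have e : F[X] ⧸ Ideal.span {A * B} ≃+*
      (F[X] ⧸ Ideal.span {A}) × (F[X] ⧸ Ideal.span {B}) := by
    rw [← Ideal.span_singleton_mul_span_singleton]
    exact Ideal.quotientMulEquivQuotientProd _ _ ((Ideal.isCoprime_span_singleton_iff A B).2 h)
  rw [polyPhi, Nat.card_congr (Units.mapEquiv e.toMulEquiv).toEquiv,
    Nat.card_congr MulEquiv.prodUnits.toEquiv, Nat.card_prod]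
  rfl

lemma polyPhi_prod {ι : Type*} {s : Finset ι} {f : ι → F[X]}
    (h : (s : Set ι).Pairwise (IsCoprime on f)) :
    polyPhi (∏ i ∈ s, f i) = ∏ i ∈ s, polyPhi (f i) := by
  classical
  induction s using Finset.induction_on with
  | empty => simpa using polyPhi_one
  | insert i s hi ih =>
    rw [coe_insert, Set.pairwise_insert] at h
    have hcop : IsCoprime (f i) (∏ j ∈ s, f j) :=
      IsCoprime.prod_right fun j hj ↦ (h.2 j hj fun hij ↦ hi (hij ▸ hj)).1
    rw [prod_insert hi, prod_insert hi, polyPhi_mul hcop, ih h.1]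

end Multiplicativity

namespace Polynomial

section Factorization

variable [Field F]

lemma natDegree_prod_pow_of_monic {ι : Type*} (s : Finset ι) (f : ι → F[X]) (c : ι → ℕ)
    (hf : ∀ i ∈ s, (f i).Monic) :
    (∏ i ∈ s, f i ^ c i).natDegree = ∑ i ∈ s, c i * (f i).natDegree := by
  rw [natDegree_prod_of_monic _ _ fun i hi ↦ (hf i hi).pow _]
  exact sum_congr rfl fun i hi ↦ (hf i hi).natDegree_pow _

variable [DecidableEq F]

lemma monic_of_mem_primeFactors {N P : F[X]} (h : P ∈ primeFactors N) : P.Monic := by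
  have hN : N ≠ 0 := by rintro rfl; simp at h
  exact ((Polynomial.mem_normalizedFactors_iff hN).1 (mem_primeFactors.1 h)).2.1

lemma irreducible_of_mem_primeFactors {N P : F[X]} (h : P ∈ primeFactors N) : Irreducible P :=
  irreducible_of_normalized_factor P (mem_primeFactors.1 h)

lemma monic_radical (N : F[X]) : (radical N).Monic :=
  monic_prod_of_monic _ _ fun _ ↦ monic_of_mem_primeFactors

lemma natDegree_radical_le {N : F[X]} (hN : N ≠ 0) : (radical N).natDegree ≤ N.natDegree :=
  natDegree_le_of_dvd radical_dvd_self hN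

lemma Monic.radical_eq_self_of_squarefree {D : F[X]} (hD : D.Monic) (hsf : Squarefree D) :
    radical D = D :=
  eq_of_monic_of_associated (monic_radical D) hD (radical_associated hsf.isRadical hD.ne_zero)

lemma Monic.exists_eq_prod_primeFactors_pow {N : F[X]} (hN : N.Monic) :
    ∃ c : F[X] → ℕ, (∀ P ∈ primeFactors N, 0 < c P) ∧
      N = ∏ P ∈ primeFactors N, P ^ c P := by
  classical
  refine ⟨fun P ↦ (normalizedFactors N).count P,
    fun P hP ↦ Multiset.count_pos.2 (mem_primeFactors.1 hP), ?_⟩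
  rw [← toFinset_normalizedFactors, ← prod_multiset_count, prod_normalizedFactors_eq hN.ne_zero,
    hN.normalize_eq_self]

end Factorization

section Counting

variable [Field F]

lemma IsMonicOfDegree.degree_sub_X_pow_lt {p : F[X]} {n : ℕ} (hp : p.IsMonicOfDegree n) :
    (p - X ^ n).degree < (n : WithBot ℕ) := by
  have hdeg : p.degree = (X ^ n : F[X]).degree := by
    rw [degree_X_pow, degree_eq_natDegree hp.ne_zero, hp.natDegree_eq]
  have hlc : p.leadingCoeff = (X ^ n : F[X]).leadingCoeff := by
    rw [hp.leadingCoeff_eq, leadingCoeff_X_pow]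
  simpa [hdeg] using degree_sub_lt_left hdeg hp.ne_zero hlc

lemma isMonicOfDegree_X_pow_add {g : F[X]} {n : ℕ} (hg : g.degree < n) :
    (X ^ n + g).IsMonicOfDegree n := by
  refine ⟨?_, monic_X_pow_add hg⟩
  rw [natDegree_add_eq_left_of_degree_lt (by rwa [degree_X_pow]), natDegree_X_pow]

def isMonicOfDegreeEquivDegreeLT (n : ℕ) :
    {p : F[X] | p.IsMonicOfDegree n} ≃ degreeLT F n where
  toFun p := ⟨p.1 - X ^ n, mem_degreeLT.2 p.2.degree_sub_X_pow_lt⟩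
  invFun g := ⟨X ^ n + g.1, isMonicOfDegree_X_pow_add (mem_degreeLT.1 g.2)⟩
  left_inv _ := Subtype.ext (add_sub_cancel _ _)
  right_inv _ := Subtype.ext (add_sub_cancel_left _ _)

variable [Fintype F]

lemma ncard_setOf_isMonicOfDegree (n : ℕ) :
    {p : F[X] | p.IsMonicOfDegree n}.ncard = Fintype.card F ^ n := by
  rw [← Nat.card_coe_set_eq,
    Nat.card_congr ((isMonicOfDegreeEquivDegreeLT n).trans (degreeLTEquiv F n).toEquiv),
    Nat.card_fun, Nat.card_eq_fintype_card, Nat.card_fin]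

lemma finite_setOf_isMonicOfDegree (n : ℕ) : {p : F[X] | p.IsMonicOfDegree n}.Finite :=
  Set.finite_coe_iff.1 <|
    .of_equiv _ ((isMonicOfDegreeEquivDegreeLT n).trans (degreeLTEquiv F n).toEquiv).symm

lemma finite_setOf_monic_natDegree_le (z : ℕ) :
    {p : F[X] | p.Monic ∧ p.natDegree ≤ z}.Finite :=
  ((Set.finite_Iic z).biUnion fun n _ ↦ finite_setOf_isMonicOfDegree n).subset
    fun p hp ↦ Set.mem_biUnion (x := p.natDegree) hp.2 ⟨rfl, hp.1⟩

variable (F) in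
def monicNatDegreeLE (z : ℕ) : Finset F[X] :=
  (finite_setOf_monic_natDegree_le z).toFinset

@[simp]
lemma mem_monicNatDegreeLE {z : ℕ} {p : F[X]} :
    p ∈ monicNatDegreeLE F z ↔ p.Monic ∧ p.natDegree ≤ z :=
  Set.Finite.mem_toFinset _

lemma sum_monicNatDegreeLE_inv_card_pow (z : ℕ) :
    ∑ p ∈ monicNatDegreeLE F z, (Fintype.card F : ℝ)⁻¹ ^ p.natDegree = z + 1 := by
  have hmaps : ∀ p ∈ monicNatDegreeLE F z, p.natDegree ∈ range (z + 1) := fun p hp ↦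
    mem_range.2 (Nat.lt_succ_of_le (mem_monicNatDegreeLE.1 hp).2)
  have hq : (Fintype.card F : ℝ) ≠ 0 := Nat.cast_ne_zero.2 Fintype.card_ne_zero
  have hlevel : ∀ n ∈ range (z + 1), ∑ p ∈ monicNatDegreeLE F z with p.natDegree = n,
      (Fintype.card F : ℝ)⁻¹ ^ p.natDegree = 1 := fun n hn ↦ by
    have hcard : #{p ∈ monicNatDegreeLE F z | p.natDegree = n} = Fintype.card F ^ n := by
      rw [← ncard_setOf_isMonicOfDegree, ← Set.ncard_coe_finset]
      congr 1
      ext p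
      simp only [coe_filter, mem_monicNatDegreeLE, Set.mem_ofPred_eq, isMonicOfDegree_iff']
      constructor
      · exact fun ⟨⟨hm, _⟩, hd⟩ ↦ ⟨hd, hm⟩
      · exact fun ⟨hd, hm⟩ ↦ ⟨⟨hm, hd ▸ Nat.lt_succ_iff.1 (mem_range.1 hn)⟩, hd⟩
    rw [sum_congr rfl fun p hp ↦ by rw [(mem_filter.1 hp).2], sum_const, hcard, nsmul_eq_mul,
      Nat.cast_pow, ← mul_pow, mul_inv_cancel₀ hq, one_pow]
  rw [← sum_fiberwise_of_maps_to hmaps, sum_congr rfl hlevel, sum_const, card_range, nsmul_one,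
    Nat.cast_succ]

end Counting

lemma card_quotient_span_singleton [Field F] [Fintype F] {D : F[X]} (hD : D ≠ 0) :
    Nat.card (F[X] ⧸ Ideal.span {D}) = Fintype.card F ^ D.natDegree := by
  let e : F[X] ⧸ Ideal.span {D} ≃ (Fin D.natDegree → F) :=
    (AdjoinRoot.powerBasis hD).basis.equivFun.toEquiv
  rw [Nat.card_congr e, Nat.card_fun, Nat.card_eq_fintype_card, Nat.card_eq_fintype_card,
    Fintype.card_fin]

end Polynomial

section FiniteField

variable [Field F] [Fintype F]

lemma polyPhi_of_irreducible {P : F[X]} (hP : Irreducible P) :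
    polyPhi P = Fintype.card F ^ P.natDegree - 1 := by
  have := PrincipalIdealRing.isMaximal_of_irreducible hP
  let := Ideal.Quotient.field (Ideal.span {P})
  rw [polyPhi, Nat.card_units, card_quotient_span_singleton hP.ne_zero]

variable [DecidableEq F]

lemma polyPhi_of_squarefree {D : F[X]} (hD : D.Monic) (hsf : Squarefree D) :
    polyPhi D = ∏ P ∈ primeFactors D, (Fintype.card F ^ P.natDegree - 1) := by
  have hcop : (primeFactors D : Set F[X]).Pairwise (IsCoprime on id) :=
    pairwise_primeFactors_isRelPrime.mono' fun _ _ ↦ IsRelPrime.isCoprime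
  conv_lhs => rw [← hD.radical_eq_self_of_squarefree hsf, radical, polyPhi_prod hcop]
  exact prod_congr rfl fun P hP ↦ polyPhi_of_irreducible (irreducible_of_mem_primeFactors hP)

end FiniteField

lemma sum_Icc_inv_pow_le {y : ℝ} (hy : 1 < y) (z : ℕ) :
    ∑ e ∈ Icc 1 z, y⁻¹ ^ e ≤ (y - 1)⁻¹ := by
  have hy0 : y ≠ 0 := by positivity
  have hy1 : y - 1 ≠ 0 := sub_ne_zero.2 hy.ne'
  calc ∑ e ∈ Icc 1 z, y⁻¹ ^ e = ∑ e ∈ Ico 1 (z + 1), y⁻¹ ^ e := rfl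
    _ ≤ y⁻¹ ^ 1 / (1 - y⁻¹) :=
        geom_sum_Ico_le_of_lt_one (inv_nonneg.2 (by positivity)) (inv_lt_one_of_one_lt₀ hy)
    _ = (y - 1)⁻¹ := by field_simp

section Fibres

variable [Field F] [DecidableEq F]

lemma sum_pow_natDegree_le_prod_primeFactors {x : ℝ} (hx : 0 ≤ x) (z : ℕ) (D : F[X])
    {s : Finset F[X]}
    (hs : ∀ N ∈ s, N.Monic ∧ N.natDegree ≤ z ∧ primeFactors N = primeFactors D) :
    ∑ N ∈ s, x ^ N.natDegree ≤
      ∏ P ∈ primeFactors D, ∑ e ∈ Icc 1 z, (x ^ P.natDegree) ^ e := by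
  set S := primeFactors D
  set T := Fintype.piFinset fun _ : S ↦ Icc 1 z
  let g : (S → ℕ) → F[X] := fun c ↦ ∏ P : S, (P : F[X]) ^ c P
  have hdeg (c : S → ℕ) : (g c).natDegree = ∑ P : S, c P * (P : F[X]).natDegree :=
    natDegree_prod_pow_of_monic _ _ _ fun P _ ↦ monic_of_mem_primeFactors P.2
  have hcover : s ⊆ T.image g := by
    intro N hN
    obtain ⟨hmonic, hz, hpf⟩ := hs N hN
    obtain ⟨c, hpos, hprod⟩ := hmonic.exists_eq_prod_primeFactors_pow
    rw [hpf] at hpos hprod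
    have hNg : g (fun P ↦ c P) = N := (prod_coe_sort S fun P ↦ P ^ c P).trans hprod.symm
    refine mem_image.2
      ⟨fun P ↦ c P, Fintype.mem_piFinset.2 fun P ↦ mem_Icc.2 ⟨hpos P P.2, ?_⟩, hNg⟩
    calc c P ≤ c P * (P : F[X]).natDegree :=
          Nat.le_mul_of_pos_right _ (irreducible_of_mem_primeFactors P.2).natDegree_pos
      _ ≤ ∑ Q : S, c Q * (Q : F[X]).natDegree :=
          single_le_sum (f := fun Q : S ↦ c Q * (Q : F[X]).natDegree) (fun _ _ ↦ Nat.zero_le _)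
            (mem_univ P)
      _ = N.natDegree := by rw [← hdeg, hNg]
      _ ≤ z := hz
  calc ∑ N ∈ s, x ^ N.natDegree
      ≤ ∑ N ∈ T.image g, x ^ N.natDegree :=
        sum_le_sum_of_subset_of_nonneg hcover fun _ _ _ ↦ pow_nonneg hx _
    _ ≤ ∑ c ∈ T, x ^ (g c).natDegree :=
        sum_image_le_of_nonneg fun _ _ ↦ pow_nonneg hx _
    _ = ∑ c ∈ T, ∏ P : S, (x ^ (P : F[X]).natDegree) ^ c P := by
        refine sum_congr rfl fun c _ ↦ ?_
        rw [hdeg, ← prod_pow_eq_pow_sum]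
        exact prod_congr rfl fun P _ ↦ by rw [← pow_mul, mul_comm]
    _ = ∏ P ∈ S, ∑ e ∈ Icc 1 z, (x ^ P.natDegree) ^ e :=
        (prod_univ_sum _ _).symm.trans
          (prod_coe_sort S fun P ↦ ∑ e ∈ Icc 1 z, (x ^ P.natDegree) ^ e)

lemma sum_inv_card_pow_natDegree_le_inv_polyPhi [Fintype F] (z : ℕ) {D : F[X]} (hD : D.Monic)
    (hsf : Squarefree D) {s : Finset F[X]}
    (hs : ∀ N ∈ s, N.Monic ∧ N.natDegree ≤ z ∧ primeFactors N = primeFactors D) :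
    ∑ N ∈ s, (Fintype.card F : ℝ)⁻¹ ^ N.natDegree ≤ (polyPhi D : ℝ)⁻¹ := by
  have hq : (1 : ℝ) < Fintype.card F := by exact_mod_cast Fintype.one_lt_card
  have hpow (P : F[X]) (hP : P ∈ primeFactors D) :
      (1 : ℝ) < (Fintype.card F : ℝ) ^ P.natDegree :=
    one_lt_pow₀ hq (irreducible_of_mem_primeFactors hP).natDegree_pos.ne'
  calc ∑ N ∈ s, (Fintype.card F : ℝ)⁻¹ ^ N.natDegree
      ≤ ∏ P ∈ primeFactors D,
          ∑ e ∈ Icc 1 z, ((Fintype.card F : ℝ)⁻¹ ^ P.natDegree) ^ e :=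
        sum_pow_natDegree_le_prod_primeFactors (by positivity) z D hs
    _ ≤ ∏ P ∈ primeFactors D, ((Fintype.card F : ℝ) ^ P.natDegree - 1)⁻¹ :=
        prod_le_prod (fun _ _ ↦ by positivity)
          fun P hP ↦ inv_pow (Fintype.card F : ℝ) _ ▸ sum_Icc_inv_pow_le (hpow P hP) z
    _ = (polyPhi D : ℝ)⁻¹ := by
        rw [polyPhi_of_squarefree hD hsf, Nat.cast_prod, ← prod_inv_distrib]
        refine prod_congr rfl fun P _ ↦ ?_
        rw [Nat.cast_sub (Nat.one_le_pow _ _ Fintype.card_pos), Nat.cast_pow, Nat.cast_one]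

end Fibres

theorem sum_inv_phi_lower_bound_general
    (F : Type*) [Field F] [Fintype F]
    (z : ℕ) :
    (z : ℝ) ≤
      ∑ᶠ D ∈ {D : Polynomial F | D.Monic ∧ Squarefree D ∧ D.natDegree ≤ z ∧
          ∀ P : Polynomial F, P.Monic → Irreducible P → P ∣ D → P.natDegree ≤ z},
        ((polyPhi D : ℝ))⁻¹ := by
  classical
  set S := {D : F[X] | D.Monic ∧ Squarefree D ∧ D.natDegree ≤ z ∧
    ∀ P : F[X], P.Monic → Irreducible P → P ∣ D → P.natDegree ≤ z}
  have hS : S.Finite := (finite_setOf_monic_natDegree_le z).subset fun D hD ↦ ⟨hD.1, hD.2.2.1⟩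
  have hradical : ∀ N ∈ monicNatDegreeLE F z, radical N ∈ hS.toFinset := by
    intro N hN
    obtain ⟨hmonic, hz⟩ := mem_monicNatDegreeLE.1 hN
    have hrad_z : (radical N).natDegree ≤ z := (natDegree_radical_le hmonic.ne_zero).trans hz
    exact hS.mem_toFinset.2 ⟨monic_radical N, squarefree_radical, hrad_z,
      fun P _ _ hP ↦ (natDegree_le_of_dvd hP radical_ne_zero).trans hrad_z⟩
  rw [finsum_mem_eq_finite_toFinset_sum _ hS]
  calc (z : ℝ) ≤ z + 1 := by linarith
    _ = ∑ N ∈ monicNatDegreeLE F z, (Fintype.card F : ℝ)⁻¹ ^ N.natDegree :=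
        (sum_monicNatDegreeLE_inv_card_pow z).symm
    _ = ∑ D ∈ hS.toFinset, ∑ N ∈ monicNatDegreeLE F z with radical N = D,
          (Fintype.card F : ℝ)⁻¹ ^ N.natDegree :=
        (sum_fiberwise_of_maps_to hradical _).symm
    _ ≤ ∑ D ∈ hS.toFinset, (polyPhi D : ℝ)⁻¹ := by
        refine sum_le_sum fun D hD ↦ ?_
        obtain ⟨hmonic, hsf, -⟩ := hS.mem_toFinset.1 hD
        refine sum_inv_card_pow_natDegree_le_inv_polyPhi z hmonic hsf fun N hN ↦ ?_
        obtain ⟨hNz, rfl⟩ := mem_filter.1 hN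
        exact ⟨(mem_monicNatDegreeLE.1 hNz).1, (mem_monicNatDegreeLE.1 hNz).2,
          primeFactors_radical.symm⟩

/-- For every integer `z ≥ 1`, `Σ 1/φ(D) ≥ z`, the sum over monic squarefree `D`
with `deg D ≤ z` all of whose monic irreducible factors have degree at most `z`. -/
theorem sum_inv_phi_lower_bound
    (F : Type*) [Field F] [Fintype F] (q : ℕ) (hq : Fintype.card F = q)
    (z : ℕ) (hz : 1 ≤ z) :
    (z : ℝ) ≤
      ∑ᶠ D ∈ {D : Polynomial F | D.Monic ∧ Squarefree D ∧ D.natDegree ≤ z ∧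
          ∀ P : Polynomial F, P.Monic → Irreducible P → P ∣ D → P.natDegree ≤ z},
        ((polyPhi D : ℝ))⁻¹ :=
  sum_inv_phi_lower_bound_general F z
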